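/- The function F(t) = S(t) − 2·log(2/t), where S(t) = cosh(t)·log((cosh t +1)/(cosh t −1)) − 2, can be written as F(t) = (cosh t − 1)·log((cosh t + 1)/(cosh t − 1)) + log(t²·(cosh t + 1)/(4·(cosh t − 1))) − 2 for t > 0, and its second derivative satisfies |F''(t)| = O(log(1/t)) as t → 0⁺. -/

import Mathlib

open Filter

/-- `S(t) = cosh(t)·log((cosh t + 1)/(cosh t − 1)) − 2`. -/
noncomputable def Sfun (t : ℝ) : ℝ :=
  Real.cosh t * Real.log ((Real.cosh t + 1) / (Real.cosh t - 1)) - 2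

/-- `F(t) = S(t) − 2·log(2/t)`. -/
noncomputable def Ffun (t : ℝ) : ℝ := Sfun t - 2 * Real.log (2 / t)

/-!
With `L t = log ((cosh t + 1) / (cosh t - 1)) = 2 log coth (t / 2)` one has `L' = -2 / sinh`,
so `F'' t = cosh t * L t + 2 (1 / sinh² t - 1 / t²) - 2`. The middle term lies in `[-2, 0]` because
`t ≤ sinh t ≤ t cosh t`, and `0 ≤ L t ≤ log (1 + 4 / t²)` because `cosh t - 1 ≥ t² / 2`; both
comparisons are termwise comparisons of the power series of `sinh` and `cosh`.
-/

open Real Asymptotics Topology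

noncomputable def logCoshRatio (t : ℝ) : ℝ := log ((cosh t + 1) / (cosh t - 1))

lemma one_add_sq_div_two_le_cosh (t : ℝ) : 1 + t ^ 2 / 2 ≤ cosh t := by
  have hsum := sum_le_hasSum (Finset.range 2)
    (fun n _ => div_nonneg ((even_two_mul n).pow_nonneg t) (Nat.cast_nonneg _)) (hasSum_cosh t)
  simpa [Finset.sum_range_succ] using hsum

lemma sinh_le_mul_cosh {t : ℝ} (ht : 0 ≤ t) : sinh t ≤ t * cosh t := by
  refine hasSum_le (fun n => ?_) (hasSum_sinh t) ((hasSum_cosh t).mul_left t)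
  rw [pow_succ', mul_div_assoc]
  gcongr
  omega

lemma abs_inv_sinh_sq_sub_inv_sq_le_one {t : ℝ} (ht : 0 < t) :
    |(sinh t ^ 2)⁻¹ - (t ^ 2)⁻¹| ≤ 1 := by
  have hts : t ≤ sinh t := self_le_sinh_iff.2 ht.le
  have hsc := sinh_le_mul_cosh ht.le
  have hs : 0 < sinh t := ht.trans_le hts
  have hsq : t ^ 2 ≤ sinh t ^ 2 := pow_le_pow_left₀ ht.le hts 2
  have hgap : sinh t ^ 2 - t ^ 2 ≤ t ^ 2 * sinh t ^ 2 := by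
    nlinarith [cosh_sq t, pow_le_pow_left₀ hs.le hsc 2]
  have hdiff : (t ^ 2)⁻¹ - (sinh t ^ 2)⁻¹ = (sinh t ^ 2 - t ^ 2) / (t ^ 2 * sinh t ^ 2) := by
    field_simp
  rw [abs_sub_comm, abs_le, hdiff, div_le_one (by positivity)]
  exact ⟨(neg_nonpos.2 zero_le_one).trans (div_nonneg (sub_nonneg.2 hsq) (by positivity)), hgap⟩

lemma cosh_sub_one_pos {t : ℝ} (ht : t ≠ 0) : 0 < cosh t - 1 :=
  sub_pos.2 (one_lt_cosh.2 ht)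

lemma logCoshRatio_nonneg {t : ℝ} (ht : t ≠ 0) : 0 ≤ logCoshRatio t :=
  log_nonneg <| (one_le_div (cosh_sub_one_pos ht)).2 (by linarith)

lemma logCoshRatio_le {t : ℝ} (ht : t ≠ 0) : logCoshRatio t ≤ log (1 + 4 / t ^ 2) := by
  have hc := cosh_sub_one_pos ht
  have hratio : (cosh t + 1) / (cosh t - 1) = 1 + 2 / (cosh t - 1) := by field_simp; ring
  have hquot : 2 / (cosh t - 1) ≤ 4 / t ^ 2 := by
    rw [div_le_div_iff₀ hc (by positivity)]
    linarith [one_add_sq_div_two_le_cosh t]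
  unfold logCoshRatio
  rw [hratio]
  exact log_le_log (by positivity) (by linarith)

lemma hasDerivAt_logCoshRatio {t : ℝ} (ht : t ≠ 0) :
    HasDerivAt logCoshRatio (-2 / sinh t) t := by
  have hc := cosh_sub_one_pos ht
  have hs : sinh t ≠ 0 := sinh_ne_zero.2 ht
  have h := (((hasDerivAt_cosh t).add_const 1).div ((hasDerivAt_cosh t).sub_const 1)
    hc.ne').log (div_pos (by linarith) hc).ne'
  simp only [Pi.div_apply] at h
  refine h.congr_deriv ?_
  field_simp
  linear_combination 2 * cosh_sq t

lemma hasDerivAt_Ffun {t : ℝ} (ht : t ≠ 0) :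
    HasDerivAt Ffun (sinh t * logCoshRatio t - 2 * cosh t / sinh t + 2 / t) t := by
  have h2t := ((hasDerivAt_const t (2 : ℝ)).div (hasDerivAt_id t) ht).log
    (div_ne_zero two_ne_zero ht)
  simp only [Pi.div_apply, id] at h2t
  have h := (((hasDerivAt_cosh t).mul (hasDerivAt_logCoshRatio ht)).sub_const 2).sub
    (h2t.const_mul 2)
  refine h.congr_deriv ?_
  field_simp
  ring

lemma iteratedDeriv_two_Ffun {t : ℝ} (ht : t ≠ 0) :
    iteratedDeriv 2 Ffun t =
      cosh t * logCoshRatio t + 2 * ((sinh t ^ 2)⁻¹ - (t ^ 2)⁻¹) - 2 := by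
  have hderiv : deriv Ffun =ᶠ[𝓝 t]
      fun s => sinh s * logCoshRatio s - 2 * cosh s / sinh s + 2 / s :=
    (eventually_ne_nhds ht).mono fun s hs => (hasDerivAt_Ffun hs).deriv
  have hs : sinh t ≠ 0 := sinh_ne_zero.2 ht
  have h : HasDerivAt (fun s => sinh s * logCoshRatio s - 2 * cosh s / sinh s + 2 / s) _ t :=
    (((hasDerivAt_sinh t).mul (hasDerivAt_logCoshRatio ht)).sub
    (((hasDerivAt_cosh t).const_mul 2).div (hasDerivAt_sinh t) hs)).add
    ((hasDerivAt_const t (2 : ℝ)).div (hasDerivAt_id t) ht)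
  rw [iteratedDeriv_succ, iteratedDeriv_one, hderiv.deriv_eq, h.deriv]
  field_simp
  linear_combination 2 * t ^ 2 * cosh_sq t

lemma Ffun_eq_cosh_sub_one_mul_add_log {t : ℝ} (ht : t ≠ 0) :
    Ffun t = (cosh t - 1) * log ((cosh t + 1) / (cosh t - 1)) +
      log (t ^ 2 * (cosh t + 1) / (4 * (cosh t - 1))) - 2 := by
  have hc := cosh_sub_one_pos ht
  have h : t ^ 2 * (cosh t + 1) / (4 * (cosh t - 1)) =
      (2 / t)⁻¹ ^ 2 * ((cosh t + 1) / (cosh t - 1)) := by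
    field_simp
    ring
  rw [h, log_mul (by positivity) (div_pos (by linarith) hc).ne', log_pow, log_inv]
  unfold Ffun Sfun
  push_cast
  ring

lemma isBigO_one_log_one_div :
    (fun _ => (1 : ℝ)) =O[𝓝[>] 0] fun t => log (1 / t) := by
  refine ((isLittleO_one_left_iff ℝ).2 (tendsto_norm_atTop_atTop.comp ?_)).isBigO
  simp only [one_div, log_inv]
  exact tendsto_neg_atBot_atTop.comp tendsto_log_nhdsGT_zero

lemma isBigO_logCoshRatio : logCoshRatio =O[𝓝[>] 0] fun t => log (1 / t) := by
  have hbound : ∀ᶠ t in 𝓝[>] 0, ‖logCoshRatio t‖ ≤ log 5 + 2 * log (1 / t) := by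
    filter_upwards [Ioo_mem_nhdsGT one_pos] with t ⟨ht0, ht1⟩
    have hinv : 1 ≤ (1 / t) ^ 2 := one_le_pow₀ (by rw [le_div_iff₀ ht0]; linarith)
    rw [norm_of_nonneg (logCoshRatio_nonneg ht0.ne')]
    calc logCoshRatio t ≤ log (1 + 4 / t ^ 2) := logCoshRatio_le ht0.ne'
      _ ≤ log (5 * (1 / t) ^ 2) := log_le_log (by positivity) (by ring_nf at hinv ⊢; linarith)
      _ = log 5 + 2 * log (1 / t) := by
        rw [log_mul (by norm_num) (by positivity), log_pow]
        push_cast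
        ring
  refine (IsBigO.of_norm_eventuallyLE hbound).trans ?_
  exact ((isBigO_const_one ℝ _ _).trans isBigO_one_log_one_div).add
    ((isBigO_refl _ _).const_mul_left 2)

/-- The alternative expression for `F` on `(0,∞)`, and the bound
`|F''(t)| = O(log(1/t))` as `t → 0⁺`. -/
theorem F_formula_and_second_derivative_bound :
    (∀ t : ℝ, 0 < t →
      Ffun t = (Real.cosh t - 1) *
            Real.log ((Real.cosh t + 1) / (Real.cosh t - 1)) +
          Real.log (t ^ 2 * (Real.cosh t + 1) / (4 * (Real.cosh t - 1))) - 2) ∧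
    (fun t : ℝ => iteratedDeriv 2 Ffun t)
      =O[nhdsWithin 0 (Set.Ioi 0)] (fun t : ℝ => Real.log (1 / t)) := by
  refine ⟨fun t ht => Ffun_eq_cosh_sub_one_mul_add_log ht.ne', ?_⟩
  have hF2 : (fun t => iteratedDeriv 2 Ffun t) =ᶠ[𝓝[>] 0]
      fun t => cosh t * logCoshRatio t + 2 * ((sinh t ^ 2)⁻¹ - (t ^ 2)⁻¹) - 2 :=
    eventually_mem_nhdsWithin.mono fun t ht => iteratedDeriv_two_Ffun (ne_of_gt ht)
  have hcosh : cosh =O[𝓝[>] 0] fun _ => (1 : ℝ) :=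
    ((continuous_cosh.tendsto 0).mono_left nhdsWithin_le_nhds).isBigO_one ℝ
  have hinv : (fun t => (sinh t ^ 2)⁻¹ - (t ^ 2)⁻¹) =O[𝓝[>] 0] fun _ => (1 : ℝ) := by
    refine IsBigO.of_bound 1 ?_
    filter_upwards [self_mem_nhdsWithin] with t ht
    simpa using abs_inv_sinh_sq_sub_inv_sq_le_one ht
  refine IsBigO.congr' ?_ hF2.symm EventuallyEq.rfl
  refine (IsBigO.add ?_ ((hinv.const_mul_left 2).trans isBigO_one_log_one_div)).sub
    ((isBigO_const_one ℝ _ _).trans isBigO_one_log_one_div)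
  simpa only [one_mul] using hcosh.mul isBigO_logCoshRatio
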